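/- With the Aᵢ as in the ZULC reduction, if a word i₁,…,i_L contains exactly one occurrence of index 6 (and no 7), then tr(A_{i₁}⋯A_{i_L}) = (⟨0|Y_{j₁}⋯Y_{j_{L−1}}|0⟩)² + 1 > 0, where j₁,…,j_{L−1} is the word with the 6 cyclically moved to the end and removed. -/

import Mathlib

/-! Since `O Oᴴ = 1` and `Oᴴ O = P`, the projection `P` is absorbed by `O` on the right and by
`Oᴴ` on the left, so `A_i` is the block `O (Y_i ⊗ Y_i) Oᴴ ⊕ 1`. The map `X ↦ O X Oᴴ` is
multiplicative on matrices commuting with `P`, and the swap `F` (hence `P`) commutes with every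
`Y ⊗ Y`, so the product of the blocks is `O (W ⊗ W) Oᴴ` with `W = Y_{j₁} ⋯ Y_{j_L}`. Multiplying by
`O E Oᴴ` and using cyclicity of the trace leaves `tr(P (W ⊗ W) E) = ⟨00|W ⊗ W|00⟩ = W₀₀²`,
because `P |00⟩ = |00⟩`; the unit block adds `1`, and `W₀₀` is an integer. -/

open Matrix Kronecker ComplexOrder

namespace Matrix

def swapMatrix (ι R : Type*) [DecidableEq ι] [Zero R] [One R] : Matrix (ι × ι) (ι × ι) R :=
  fun p q => if p.1 = q.2 ∧ p.2 = q.1 then 1 else 0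

section Swap

variable {ι R : Type*} [DecidableEq ι] [Fintype ι] [NonAssocSemiring R]

theorem swapMatrix_mul_apply (M : Matrix (ι × ι) (ι × ι) R) (p q : ι × ι) :
    (swapMatrix ι R * M) p q = M p.swap q := by
  have hswap (x : ι × ι) : (p.1 = x.2 ∧ p.2 = x.1) ↔ x = p.swap := by
    simp [Prod.ext_iff, eq_comm, and_comm]
  simp [swapMatrix, mul_apply, hswap]

theorem mul_swapMatrix_apply (M : Matrix (ι × ι) (ι × ι) R) (p q : ι × ι) :
    (M * swapMatrix ι R) p q = M p q.swap := by
  have hswap (x : ι × ι) : (x.1 = q.2 ∧ x.2 = q.1) ↔ x = q.swap := by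
    simp [Prod.ext_iff]
  simp [swapMatrix, mul_apply, hswap]

theorem swapMatrix_commute_kronecker_self {R : Type*} [CommSemiring R] (M : Matrix ι ι R) :
    Commute (swapMatrix ι R) (M ⊗ₖ M) := by
  ext p q
  simp [swapMatrix_mul_apply, mul_swapMatrix_apply, mul_comm]

theorem swapMatrix_mul_single_diag (i : ι) (q : ι × ι) (c : R) :
    swapMatrix ι R * single (i, i) q c = single (i, i) q c := by
  ext p r
  simp [swapMatrix_mul_apply, single_apply, Prod.ext_iff, and_comm]

end Swap

theorem list_prod_map_kronecker_self {n R : Type*} [Fintype n] [DecidableEq n] [CommSemiring R]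
    (l : List (Matrix n n R)) : (l.map fun M => M ⊗ₖ M).prod = l.prod ⊗ₖ l.prod := by
  induction l with
  | nil => simp
  | cons M l ih => simp [ih, mul_kronecker_mul]

section Blocks

variable {m o R : Type*} [Fintype m] [Fintype o] [Semiring R]

theorem list_prod_map_fromBlocks_mul [DecidableEq m] [DecidableEq o] (l : List (Matrix m m R))
    (Y : Matrix m m R) (D : Matrix o o R) :
    (l.map fun X => fromBlocks X 0 0 1).prod * fromBlocks Y 0 0 D =
      fromBlocks (l.prod * Y) 0 0 D := by
  induction l with
  | nil => simp
  | cons X l ih => simp [Matrix.mul_assoc, ih, fromBlocks_multiply]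

theorem trace_fromBlocks_zero_zero (A : Matrix m m R) (D : Matrix o o R) :
    (fromBlocks A 0 0 D).trace = A.trace + D.trace := by
  simp [trace, Fintype.sum_sum_type]

end Blocks

section Compression

variable {m n R : Type*} [Fintype m] [Fintype n] [DecidableEq m] [Semiring R]
  {O : Matrix m n R} {V : Matrix n m R} {P : Matrix n n R}

theorem mul_proj_eq_self (hO : O * V = 1) (hP : V * O = P) : O * P = O := by
  rw [← hP, ← Matrix.mul_assoc, hO, Matrix.one_mul]

theorem proj_mul_eq_self (hO : O * V = 1) (hP : V * O = P) : P * V = V := by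
  rw [← hP, Matrix.mul_assoc, hO, Matrix.mul_one]

theorem mul_proj_mul_proj_mul (hO : O * V = 1) (hP : V * O = P) (X : Matrix n n R) :
    O * P * X * P * V = O * X * V := by
  rw [mul_proj_eq_self hO hP, Matrix.mul_assoc, proj_mul_eq_self hO hP]

theorem compression_mul_compression (hO : O * V = 1) (hP : V * O = P) {X : Matrix n n R}
    (hX : Commute P X) (Y : Matrix n n R) :
    O * X * V * (O * Y * V) = O * (X * Y) * V := by
  calc O * X * V * (O * Y * V) = O * (X * (V * O) * Y) * V := by simp only [Matrix.mul_assoc]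
    _ = O * P * (X * Y) * V := by rw [hP, ← hX.eq]; simp only [Matrix.mul_assoc]
    _ = O * (X * Y) * V := by rw [mul_proj_eq_self hO hP]

theorem list_prod_map_compression_mul [DecidableEq n] (hO : O * V = 1) (hP : V * O = P)
    {l : List (Matrix n n R)} (hl : ∀ X ∈ l, Commute P X) (Y : Matrix n n R) :
    (l.map fun X => O * X * V).prod * (O * Y * V) = O * (l.prod * Y) * V := by
  induction l with
  | nil => simp
  | cons X l ih =>
    simp only [List.forall_mem_cons] at hl
    rw [List.map_cons, List.prod_cons, Matrix.mul_assoc, ih hl.2,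
      compression_mul_compression hO hP hl.1, List.prod_cons]
    simp only [Matrix.mul_assoc]

end Compression

theorem trace_compression {m n R : Type*} [Fintype m] [Fintype n] [CommSemiring R]
    {O : Matrix m n R} {V : Matrix n m R} {P : Matrix n n R} (hP : V * O = P) (X : Matrix n n R) :
    (O * X * V).trace = (P * X).trace := by
  rw [trace_mul_comm, ← Matrix.mul_assoc, hP]

end Matrix

theorem half_smul_one_add_mul_of_mul_eq {K A : Type*} [Field K] [Ring A] [Algebra K A]
    (h2 : (2 : K) ≠ 0) {f e : A} (hfe : f * e = e) : ((1 / 2 : K) • (1 + f)) * e = e := by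
  rw [smul_mul_assoc, add_mul, one_mul, hfe, ← two_smul K e, smul_smul,
    one_div_mul_cancel h2, one_smul]

theorem zulc_reduction_trace_single_6 (d m : ℕ) [NeZero d]
    (Y : Fin 5 → Matrix (Fin d) (Fin d) ℤ)
    (O : Matrix (Fin m) (Fin d × Fin d) ℂ) :
    let F : Matrix (Fin d × Fin d) (Fin d × Fin d) ℂ :=
      fun p q => if p.1 = q.2 ∧ p.2 = q.1 then 1 else 0
    let P : Matrix (Fin d × Fin d) (Fin d × Fin d) ℂ := (1 / 2 : ℂ) • (1 + F)
    let Yc : Fin 5 → Matrix (Fin d) (Fin d) ℂ := fun i => (Y i).map Int.cast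
    let E : Matrix (Fin d × Fin d) (Fin d × Fin d) ℂ :=
      Matrix.single ((0 : Fin d), (0 : Fin d)) ((0 : Fin d), (0 : Fin d)) 1
    let A : Fin 5 → Matrix (Fin m ⊕ Unit) (Fin m ⊕ Unit) ℂ :=
      fun i => Matrix.fromBlocks (O * P * (Yc i ⊗ₖ Yc i) * P * Oᴴ) 0 0 1
    let A₆ : Matrix (Fin m ⊕ Unit) (Fin m ⊕ Unit) ℂ :=
      Matrix.fromBlocks (O * E * Oᴴ) 0 0 1
    O * Oᴴ = 1 → Oᴴ * O = P →
    -- a word containing exactly one occurrence of 6 (and no 7): by cyclicity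
    -- of the trace it can be taken to be (j₁,…,j_{L-1},6) with jₗ ∈ {1,…,5}
    ∀ (L : ℕ) (j : Fin L → Fin 5),
      (((List.ofFn fun l => A (j l)).prod) * A₆).trace =
        (((List.ofFn fun l => Yc (j l)).prod) 0 0) ^ 2 + 1 ∧
      0 < (((List.ofFn fun l => A (j l)).prod) * A₆).trace := by
  intro F P Yc E A A₆ hO hP L j
  have hPK (M : Matrix (Fin d) (Fin d) ℂ) : Commute P (M ⊗ₖ M) :=
    ((Commute.one_left _).add_left (swapMatrix_commute_kronecker_self M)).smul_left _
  have hPE : P * E = E :=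
    half_smul_one_add_mul_of_mul_eq two_ne_zero (swapMatrix_mul_single_diag _ _ _)
  set W := (List.ofFn fun l => Yc (j l)).prod with hW
  have hprod : (List.ofFn fun l => A (j l)).prod * A₆ =
      fromBlocks (O * (W ⊗ₖ W * E) * Oᴴ) 0 0 1 := by
    have hA (i : Fin 5) : A i = fromBlocks (O * (Yc i ⊗ₖ Yc i) * Oᴴ) 0 0 1 :=
      congrArg (fromBlocks · 0 0 1) (mul_proj_mul_proj_mul hO hP _)
    have hlist : (List.ofFn fun l => A (j l)) =
        (((List.ofFn fun l => Yc (j l)).map fun M => M ⊗ₖ M).map fun X => O * X * Oᴴ).map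
          (fromBlocks · 0 0 1) := by
      simp only [List.map_ofFn, Function.comp_def, hA]
    rw [hlist, list_prod_map_fromBlocks_mul, list_prod_map_compression_mul hO hP
      (List.forall_mem_map.2 fun M _ => hPK M), list_prod_map_kronecker_self]
  have htrace : ((List.ofFn fun l => A (j l)).prod * A₆).trace = W 0 0 ^ 2 + 1 := by
    rw [hprod, trace_fromBlocks_zero_zero, trace_compression hP, ← Matrix.mul_assoc, (hPK W).eq,
      Matrix.mul_assoc, hPE, trace_mul_single]
    simp [sq]
  set n : ℤ := (List.ofFn fun l => Y (j l)).prod 0 0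
  have hWn : W 0 0 = n := by
    rw [hW, show (List.ofFn fun l => Yc (j l)) = (List.ofFn fun l => Y (j l)).map
      (Int.castRingHom ℂ).mapMatrix by rw [List.map_ofFn]; rfl, ← map_list_prod]
    rfl
  refine ⟨htrace, ?_⟩
  rw [htrace, hWn]
  exact_mod_cast (by positivity : (0 : ℤ) < n ^ 2 + 1)
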